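/- arXiv:2003.08041 — 3 statements merged into one kernel-verified Lean document; each statement's English description precedes it below -/
import Mathlib

section
/- Let l₁, …, lₙ and m₁, …, mₙ be two linearly independent families of linear forms in x₁, …, xₙ over k, and let λ₁, …, λₙ and μ₁, …, μₙ be nonzero scalars in k such that Σᵢ λᵢ lᵢ^d = Σᵢ μᵢ mᵢ^d as polynomials. Then there exist a permutation σ of {1,…,n} and nonzero scalars τ₁, …, τₙ ∈ k such that m_{σ(i)} = τᵢ lᵢ and μ_{σ(i)} τᵢ^d = λᵢ for all i; in other words, the diagonalization of a higher degree form is unique up to permutation and scaling of the linear forms. -/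
/-!
After the linear change of variables sending each `lᵢ` to `xᵢ`, the identity reads
`Σ λᵢ xᵢ^d = Σ μᵢ mᵢ^d`. Differentiating in `xⱼ` puts every `xⱼ^(d-1)` into the span of the `n`
forms `mᵢ^(d-1)`; the `xⱼ^(d-1)` are linearly independent, so the two spans coincide. A mixed
second partial `∂ₐ∂_b` (`a ≠ b`) kills every `xⱼ^(d-1)`, whereas it sends `mᵢ^(d-1)` to
`(d-1)(d-2) mᵢₐ mᵢ_b mᵢ^(d-3)`. Hence each `mᵢ` involves a single variable, linear independence
makes these variables distinct, and comparing the coefficients of the `xᵢ^d` gives the scalars.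
-/

open MvPolynomial Matrix Submodule Set Function
open scoped Nat

theorem natCast_ne_zero_of_factorial_ne_zero {R : Type*} [Semiring R] {d e : ℕ}
    (h : (d ! : R) ≠ 0) (he : 0 < e) (hed : e ≤ d) : (e : R) ≠ 0 :=
  ne_zero_of_dvd_ne_zero h (Nat.cast_dvd_cast (Nat.dvd_factorial he hed))

theorem natCast_factorial_ne_zero {k : Type*} [Field k] {d : ℕ}
    (hchar : CharZero k ∨ ∃ p : ℕ, CharP k p ∧ d < p) : (d ! : k) ≠ 0 := by
  rcases hchar with hchar | ⟨p, hp, hdp⟩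
  · exact Nat.cast_ne_zero.mpr d.factorial_ne_zero
  · have : NeZero p := ⟨by omega⟩
    have hprime := CharP.char_is_prime_of_pos k p
    rw [Ne, CharP.cast_eq_zero_iff k p, hprime.out.dvd_factorial]
    omega

theorem exists_eq_single_of_mul_eq_zero {ι M : Type*} [DecidableEq ι] [MulZeroClass M]
    [NoZeroDivisors M] {c : ι → M} (hc : c ≠ 0) (h : ∀ a b, a ≠ b → c a * c b = 0) :
    ∃ t, c t ≠ 0 ∧ c = Pi.single t (c t) := by
  obtain ⟨t, ht⟩ := Function.ne_iff.mp hc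
  refine ⟨t, ht, funext fun s => ?_⟩
  rcases eq_or_ne s t with rfl | hst
  · simp
  · simpa [hst] using (mul_eq_zero.mp (h s t hst)).resolve_right ht

theorem span_range_eq_of_linearIndependent {K V ι : Type*} [Field K] [AddCommGroup V]
    [Module K V] [Fintype ι] {v w : ι → V} (hv : LinearIndependent K v)
    (h : ∀ i, v i ∈ span K (range w)) : span K (range v) = span K (range w) :=
  have := FiniteDimensional.span_of_finite K (finite_range w)
  eq_of_le_of_finrank_le (span_le.mpr (range_subset_iff.mpr h))
    ((finrank_range_le_card w).trans (finrank_span_eq_card hv).ge)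

section LinearForms

variable {R : Type*} [CommSemiring R] {ι κ : Type*} [Fintype ι]

noncomputable def linForm (c : ι → R) : MvPolynomial ι R := ∑ j, C (c j) * X j

theorem coeff_single_one_linForm (c : ι → R) (t : ι) :
    coeff (Finsupp.single t 1) (linForm c) = c t := by
  classical
  simp [linForm, coeff_sum, coeff_C_mul, coeff_X, Finsupp.single_left_inj]

theorem linForm_eq_zero_iff {c : ι → R} : linForm c = 0 ↔ c = 0 := by
  refine ⟨fun h => funext fun t => ?_, fun h => by simp [linForm, h]⟩
  simpa [h] using (coeff_single_one_linForm c t).symm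

theorem linForm_single [DecidableEq ι] (t : ι) (a : R) :
    linForm (Pi.single t a) = C a * X t := by
  simp [linForm, Pi.single_apply, apply_ite C, ite_mul]

theorem pderiv_linForm (c : ι → R) (j : ι) : pderiv j (linForm c) = C (c j) := by
  classical
  simp [linForm, pderiv_X, Pi.single_apply]

theorem pderiv_linForm_pow (c : ι → R) (j : ι) (n : ℕ) :
    pderiv j (linForm c ^ n) = (n * c j) • linForm c ^ (n - 1) := by
  rw [pderiv_pow, pderiv_linForm, ← C_mul', C_mul, ← map_natCast C]
  ring

theorem pderiv_pderiv_linForm_pow (c : ι → R) (a b : ι) (n : ℕ) :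
    pderiv a (pderiv b (linForm c ^ n)) =
      (n * (n - 1 : ℕ) * c a * c b) • linForm c ^ (n - 2) := by
  rw [pderiv_linForm_pow, Derivation.map_smul, pderiv_linForm_pow, smul_smul, Nat.sub_sub]
  congr 1
  ring

theorem aeval_linForm [Fintype κ] (A : Matrix ι κ R) (c : ι → R) :
    aeval (fun j => linForm (A j)) (linForm c) = linForm (c ᵥ* A) := by
  simp only [linForm, map_sum, map_mul, aeval_C, aeval_X, algebraMap_eq, Finset.mul_sum,
    vecMul, dotProduct, Finset.sum_mul]
  rw [Finset.sum_comm]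
  simp only [mul_assoc]

theorem aeval_sum_C_mul_linForm_pow [Fintype κ] (A : Matrix ι κ R) (a : ι → R)
    (c : ι → ι → R) (d : ℕ) :
    aeval (fun j => linForm (A j)) (∑ i, C (a i) * linForm (c i) ^ d)
      = ∑ i, C (a i) * linForm (c i ᵥ* A) ^ d := by
  simp only [map_sum, map_mul, map_pow, aeval_C, algebraMap_eq, aeval_linForm]

omit [Fintype ι] in
theorem linearIndependent_X_pow {n : ℕ} (hn : n ≠ 0) :
    LinearIndependent R fun i : ι => (X i : MvPolynomial ι R) ^ n := by
  simp only [X_pow_eq_monomial]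
  exact (basisMonomials ι R).linearIndependent.comp (fun i => Finsupp.single i n)
    (Finsupp.single_left_injective hn)

theorem pderiv_pderiv_eq_zero_of_mem_span_X_pow {n : ℕ} {a b : ι} (hab : a ≠ b)
    {p : MvPolynomial ι R} (hp : p ∈ span R (range fun j => X j ^ n)) :
    pderiv a (pderiv b p) = 0 := by
  classical
  suffices span R (range fun j => (X j : MvPolynomial ι R) ^ n) ≤
      LinearMap.ker ((pderiv a).toLinearMap ∘ₗ (pderiv b).toLinearMap) from this hp
  rw [span_le, range_subset_iff]
  intro j
  have hsingle : (Pi.single j 1 : ι → R) a * (Pi.single j 1 : ι → R) b = 0 := by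
    rcases eq_or_ne a j with rfl | haj
    · simp [hab.symm]
    · simp [haj]
  show pderiv a (pderiv b (X j ^ n)) = 0
  rw [← one_mul (X j), ← C_1, ← linForm_single, pderiv_pderiv_linForm_pow, mul_assoc, hsingle,
    mul_zero, zero_smul]

end LinearForms

section Field

variable {k : Type*} [Field k] {ι : Type*} [Fintype ι]

theorem mul_eq_zero_of_linForm_pow_mem_span_X_pow {n : ℕ} (hn : (n : k) ≠ 0)
    (hn' : ((n - 1 : ℕ) : k) ≠ 0) {c : ι → k}
    (h : linForm c ^ n ∈ span k (range fun j => X j ^ n)) {a b : ι} (hab : a ≠ b) :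
    c a * c b = 0 := by
  have h2 := pderiv_pderiv_eq_zero_of_mem_span_X_pow hab h
  rw [pderiv_pderiv_linForm_pow, smul_eq_zero] at h2
  rcases h2 with h2 | h2
  · simpa [mul_assoc, hn, hn'] using h2
  · simp [linForm_eq_zero_iff.mp (eq_zero_of_pow_eq_zero h2)]

variable [DecidableEq ι]

theorem X_pow_mem_span_of_sum_eq {d : ℕ} (hd : (d : k) ≠ 0) {lam mu : ι → k} {c : ι → ι → k}
    (heq : ∑ i, C (lam i) * X i ^ d = ∑ i, C (mu i) * linForm (c i) ^ d) {j : ι}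
    (hj : lam j ≠ 0) : X j ^ (d - 1) ∈ span k (range fun i => linForm (c i) ^ (d - 1)) := by
  have hlhs : pderiv j (∑ i, C (lam i) * X i ^ d) = (d * lam j) • X j ^ (d - 1) := by
    simp only [map_sum, pderiv_C_mul, pderiv_pow, pderiv_X, Pi.single_apply, mul_ite, mul_one,
      mul_zero, Finset.sum_ite_eq', Finset.mem_univ, if_true, smul_eq_C_mul, C_mul, map_natCast]
    ring
  have hrhs : pderiv j (∑ i, C (mu i) * linForm (c i) ^ d) =
      ∑ i, (mu i * (d * c i j)) • linForm (c i) ^ (d - 1) := by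
    simp only [map_sum, C_mul', Derivation.map_smul, pderiv_linForm_pow, smul_smul]
  have hmem : (d * lam j) • X j ^ (d - 1) ∈ span k (range fun i => linForm (c i) ^ (d - 1)) := by
    rw [← hlhs, heq, hrhs]
    exact sum_mem fun i _ => smul_mem _ _ (subset_span ⟨i, rfl⟩)
  exact (smul_mem_iff _ (mul_ne_zero hd hj)).mp hmem

theorem exists_perm_of_sum_X_pow_eq {d : ℕ} (hd : 3 ≤ d) (hk : (d ! : k) ≠ 0)
    {c : ι → ι → k} (hc : LinearIndependent k c) {lam mu : ι → k} (hlam : ∀ i, lam i ≠ 0)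
    (heq : ∑ i, C (lam i) * X i ^ d = ∑ i, C (mu i) * linForm (c i) ^ d) :
    ∃ (σ : Equiv.Perm ι) (τ : ι → k), (∀ i, τ i ≠ 0) ∧
      (∀ i, c (σ i) = Pi.single i (τ i)) ∧ (∀ i, mu (σ i) * τ i ^ d = lam i) := by
  have hspan : span k (range fun j => X j ^ (d - 1)) =
      span k (range fun i => linForm (c i) ^ (d - 1)) :=
    span_range_eq_of_linearIndependent (linearIndependent_X_pow (by omega)) fun j =>
      X_pow_mem_span_of_sum_eq (natCast_ne_zero_of_factorial_ne_zero hk (by omega) le_rfl) heq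
        (hlam j)
  have hsingle (i : ι) : ∃ t, c i t ≠ 0 ∧ c i = Pi.single t (c i t) :=
    exists_eq_single_of_mul_eq_zero (hc.ne_zero i) fun a b hab =>
      mul_eq_zero_of_linForm_pow_mem_span_X_pow (n := d - 1)
        (natCast_ne_zero_of_factorial_ne_zero hk (by omega) (by omega))
        (natCast_ne_zero_of_factorial_ne_zero hk (by omega) (by omega))
        (by rw [hspan]; exact subset_span (mem_range_self i)) hab
  choose b hb hcb using hsingle
  have hb_inj : Injective b := by
    have hnorm (i : ι) : (c i (b i))⁻¹ • c i = Pi.single (b i) 1 := by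
      nth_rw 2 [hcb i]
      rw [← Pi.single_smul', smul_eq_mul, inv_mul_cancel₀ (hb i)]
    have hinj := (hc.units_smul fun i => Units.mk0 _ (inv_ne_zero (hb i))).injective
    intro i i' h
    apply hinj
    simp only [Pi.smul_apply', Units.smul_def, Units.val_mk0]
    rw [hnorm, hnorm, h]
  set e := Equiv.ofBijective b (Finite.injective_iff_bijective.mp hb_inj)
  have hbe (i : ι) : b (e.symm i) = i := e.apply_symm_apply i
  have hcσ (i : ι) : c (e.symm i) = Pi.single i (c (e.symm i) i) := by
    conv_lhs => rw [hcb, hbe]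
  have hcoeff : ∀ i, lam i = mu (e.symm i) * c (e.symm i) i ^ d := by
    refine Fintype.linearIndependent_iffₛ.mp (linearIndependent_X_pow (n := d) (by omega)) _ _ ?_
    calc ∑ i, lam i • X i ^ d = ∑ i, C (mu i) * linForm (c i) ^ d := by
          simp only [← heq, ← C_mul']
      _ = ∑ i, C (mu (e.symm i)) * linForm (c (e.symm i)) ^ d := (e.symm.sum_comp _).symm
      _ = ∑ i, (mu (e.symm i) * c (e.symm i) i ^ d) • X i ^ d := by
        refine Finset.sum_congr rfl fun i _ => ?_
        rw [hcσ i, linForm_single, Pi.single_eq_same, mul_pow, ← C_pow, ← mul_assoc, ← C_mul,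
          C_mul']
  exact ⟨e.symm, fun i => c (e.symm i) i, fun i => by simpa only [hbe] using hb (e.symm i), hcσ,
    fun i => (hcoeff i).symm⟩

end Field

theorem exists_perm_of_sum_linForm_pow_eq {k ι : Type*} [Field k] [Fintype ι] [DecidableEq ι]
    {d : ℕ} (hd : 3 ≤ d) (hk : (d ! : k) ≠ 0) {l m : ι → ι → k} (hl : LinearIndependent k l)
    (hm : LinearIndependent k m) {lam mu : ι → k} (hlam : ∀ i, lam i ≠ 0)
    (heq : ∑ i, C (lam i) * linForm (l i) ^ d = ∑ i, C (mu i) * linForm (m i) ^ d) :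
    ∃ (σ : Equiv.Perm ι) (τ : ι → k), (∀ i, τ i ≠ 0) ∧
      (∀ i, m (σ i) = τ i • l i) ∧ (∀ i, mu (σ i) * τ i ^ d = lam i) := by
  set L := Matrix.of l
  have hL : IsUnit L := linearIndependent_rows_iff_isUnit.mp hl
  have hdet : IsUnit L.det := (isUnit_iff_isUnit_det L).mp hL
  have hlL (i : ι) : l i ᵥ* L⁻¹ = Pi.single i 1 := by
    change (L * L⁻¹) i = _
    rw [mul_nonsing_inv _ hdet]
    ext j
    exact one_eq_pi_single
  have hmL : LinearIndependent k fun i => m i ᵥ* L⁻¹ :=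
    linearIndependent_rows_iff_isUnit.mpr
      ((linearIndependent_rows_iff_isUnit.mp hm).mul (isUnit_nonsing_inv_iff.mpr hL))
  have hdiag := congrArg (aeval fun j => linForm (L⁻¹ j)) heq
  simp only [aeval_sum_C_mul_linForm_pow, hlL, linForm_single, C_1, one_mul] at hdiag
  obtain ⟨σ, τ, hτ, hmσ, hμ⟩ := exists_perm_of_sum_X_pow_eq hd hk hmL hlam hdiag
  refine ⟨σ, τ, hτ, fun i => ?_, hμ⟩
  calc m (σ i) = m (σ i) ᵥ* L⁻¹ ᵥ* L := by
        rw [vecMul_vecMul, nonsing_inv_mul _ hdet, vecMul_one]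
    _ = τ i • l i := by rw [hmσ, single_vecMul]; rfl

theorem stmt_10_general {k : Type*} [Field k] {n d : ℕ} (hd : 3 ≤ d)
    (hchar : CharZero k ∨ ∃ p : ℕ, CharP k p ∧ d < p)
    (l m : Fin n → (Fin n → k))
    (hl : LinearIndependent k l) (hm : LinearIndependent k m)
    (lam mu : Fin n → k) (hlam : ∀ i, lam i ≠ 0)
    (heq : ∑ i, C (lam i) * (∑ j, C (l i j) * X j) ^ d
         = ∑ i, C (mu i) * (∑ j, C (m i j) * X j) ^ d) :
    ∃ (σ : Equiv.Perm (Fin n)) (τ : Fin n → k), (∀ i, τ i ≠ 0) ∧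
      (∀ i, m (σ i) = τ i • l i) ∧ (∀ i, mu (σ i) * τ i ^ d = lam i) :=
  exists_perm_of_sum_linForm_pow_eq hd (natCast_factorial_ne_zero hchar) hl hm hlam heq

/-- Let `l₁, …, lₙ` and `m₁, …, mₙ` be two linearly independent families of
linear forms (given by their coefficient vectors) in `x₁, …, xₙ` over `k`, and
`λ₁, …, λₙ, μ₁, …, μₙ` nonzero scalars with `Σᵢ λᵢ lᵢ^d = Σᵢ μᵢ mᵢ^d` as polynomials. Then
there are a permutation `σ` and nonzero scalars `τᵢ` with `m_{σ(i)} = τᵢ lᵢ` and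
`μ_{σ(i)} τᵢ^d = λᵢ` for all `i`: the diagonalization of a higher degree form is unique
up to permutation and scaling. -/
theorem stmt_10 {k : Type*} [Field k] {n d : ℕ} (hd : 3 ≤ d)
    (hchar : CharZero k ∨ ∃ p : ℕ, CharP k p ∧ d < p)
    (l m : Fin n → (Fin n → k))
    (hl : LinearIndependent k l) (hm : LinearIndependent k m)
    (lam mu : Fin n → k) (hlam : ∀ i, lam i ≠ 0) (hmu : ∀ i, mu i ≠ 0)
    (heq : ∑ i, C (lam i) * (∑ j, C (l i j) * X j) ^ d
         = ∑ i, C (mu i) * (∑ j, C (m i j) * X j) ^ d) :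
    ∃ (σ : Equiv.Perm (Fin n)) (τ : Fin n → k), (∀ i, τ i ≠ 0) ∧
      (∀ i, m (σ i) = τ i • l i) ∧ (∀ i, mu (σ i) * τ i ^ d = lam i) :=
  stmt_10_general hd hchar l m hl hm lam mu hlam heq
end

section
/- Let Θ be a smooth symmetric d-multilinear form on an n-dimensional ℂ-vector space V. Then the center Z(V,Θ) is isomorphic as a ℂ-algebra to ℂ × ⋯ × ℂ (dim Z(V,Θ) copies), and dim Z(V,Θ) ≤ n. Moreover, (V,Θ) is diagonalizable (there exists a basis β₁,…,βₙ of V with Θ(β_{j₁},…,β_{j_d}) = 0 unless j₁ = ⋯ = j_d) if and only if dim Z(V,Θ) = n. -/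
/-!
Elements of the center can be moved between any two slots of `Θ`: the defining condition is
stated for two slots and symmetry transports it to all pairs. With a third slot available this
makes `Z` closed under composition and, using symmetry once more, commutative. Smoothness makes
`Z` reduced: if `φ² = 0` then `Θ(φx, …, φx, w) = Θ(x, φ²x, φx, …, w) = 0` for all `w`. So `Z` is a
reduced finite-dimensional commutative `ℂ`-algebra, hence `Z ≅ ℂʳ`. Its primitive idempotents
`Eᵢ` are orthogonal, so any vectors `Eᵢ xᵢ ≠ 0` are independent and `r ≤ n`; when `r = n` they
form a basis, and `Θ` vanishes on a tuple of them with two different indices because the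
idempotent fixing one entry can be moved onto another entry, which it kills. Conversely, for a
diagonal basis the `n` coordinate projections lie in `Z`.
-/

open Function Module

theorem IsReduced.nonempty_algEquiv_fin_pi (K A : Type*) [Field K] [IsAlgClosed K] [CommRing A]
    [Algebra K A] [FiniteDimensional K A] [IsReduced A] :
    Nonempty (A ≃ₐ[K] (Fin (finrank K A) → K)) := by
  have : IsArtinianRing A := isArtinian_of_tower K inferInstance
  have : Fintype (MaximalSpectrum A) := Fintype.ofFinite _
  have residue_equiv (I : MaximalSpectrum A) : (A ⧸ I.asIdeal) ≃ₐ[K] K :=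
    have : FiniteDimensional K (A ⧸ I.asIdeal) :=
      .of_surjective (Ideal.Quotient.mkₐ K I.asIdeal).toLinearMap Ideal.Quotient.mk_surjective
    (AlgEquiv.ofBijective (Algebra.ofId K _) IsAlgClosed.algebraMap_bijective_of_isIntegral).symm
  let e : A ≃ₐ[K] (MaximalSpectrum A → K) :=
    ((IsArtinianRing.equivPi A).restrictScalars K).trans (AlgEquiv.piCongrRight residue_equiv)
  have hcard : Fintype.card (MaximalSpectrum A) = finrank K A := by
    rw [e.toLinearEquiv.finrank_eq, finrank_fintype_fun_eq_card]
  exact ⟨e.trans (AlgEquiv.piCongrLeft K (fun _ => K) (Fintype.equivFinOfCardEq hcard).symm).symm⟩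

theorem OrthogonalIdempotents.linearIndependent_apply {K V ι : Type*} [DivisionRing K]
    [AddCommGroup V] [Module K V] [Fintype ι] {E : ι → Module.End K V}
    (hE : OrthogonalIdempotents E) {x : ι → V} (hx : ∀ i, E i (x i) ≠ 0) :
    LinearIndependent K (fun i => E i (x i)) := by
  rw [Fintype.linearIndependent_iff]
  intro c hc j
  have hEj : E j (∑ i, c i • E i (x i)) = c j • E j (x j) := by
    rw [map_sum, Finset.sum_eq_single j]
    · rw [map_smul, ← Module.End.mul_apply, (hE.idem j).eq]
    · intro i _ hij
      rw [map_smul, ← Module.End.mul_apply, hE.ortho hij.symm, LinearMap.zero_apply, smul_zero]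
    · exact fun h => absurd (Finset.mem_univ j) h
  rw [hc, map_zero] at hEj
  exact (smul_eq_zero.mp hEj.symm).resolve_right (hx j)

theorem Subalgebra.exists_bijOn_of_algEquiv {R B C : Type*} [CommSemiring R] [Semiring B]
    [Semiring C] [Algebra R B] [Algebra R C] {A : Subalgebra R B} (e : A ≃ₐ[R] C) :
    ∃ F : B → C, Set.BijOn F A Set.univ ∧
      (∀ x ∈ A, ∀ y ∈ A, F (x + y) = F x + F y) ∧
      (∀ c : R, ∀ x ∈ A, F (c • x) = c • F x) ∧
      (∀ x ∈ A, ∀ y ∈ A, F (x * y) = F x * F y) ∧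
      F 1 = 1 := by
  classical
  let F : B → C := fun x => if h : x ∈ A then e ⟨x, h⟩ else 0
  have hF : ∀ x (hx : x ∈ A), F x = e ⟨x, hx⟩ := fun x hx => dif_pos hx
  refine ⟨F, ⟨fun _ _ => trivial, ?_, ?_⟩, ?_, ?_, ?_, ?_⟩
  · intro x hx y hy hxy
    rw [hF x hx, hF y hy] at hxy
    exact congrArg Subtype.val (e.injective hxy)
  · exact fun z _ => ⟨e.symm z, (e.symm z).2, by rw [hF _ (e.symm z).2, e.apply_symm_apply]⟩
  · intro x hx y hy
    rw [hF _ (add_mem hx hy), hF x hx, hF y hy, ← map_add]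
    rfl
  · intro c x hx
    rw [hF _ (A.smul_mem hx c), hF x hx, ← map_smul]
    rfl
  · intro x hx y hy
    rw [hF _ (mul_mem hx hy), hF x hx, hF y hy, ← map_mul]
    rfl
  · rw [hF 1 A.one_mem, ← map_one e]
    rfl

theorem AlgEquiv.orthogonalIdempotents_symm_single {R A ι : Type*} [CommSemiring R]
    [Nontrivial R] [Semiring A] [Algebra R A] [Fintype ι] [DecidableEq ι] {Z : Subalgebra R A}
    (e : Z ≃ₐ[R] (ι → R)) :
    OrthogonalIdempotents (fun i => (e.symm (Pi.single i 1) : A)) ∧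
      ∀ i, (e.symm (Pi.single i 1) : A) ≠ 0 := by
  refine ⟨(CompleteOrthogonalIdempotents.single fun _ : ι => R).toOrthogonalIdempotents.map
    (Z.val.toRingHom.comp e.symm.toRingHom), fun i h => ?_⟩
  have : (Pi.single i 1 : ι → R) = 0 :=
    e.symm.injective ((Subtype.ext h).trans (map_zero e.symm).symm)
  simpa using congrFun this i

namespace MultilinearMap

section Semiring

variable {R V W ι : Type*} [CommSemiring R] [AddCommMonoid V] [Module R V] [AddCommMonoid W]
  [Module R W] [DecidableEq ι] (Θ : MultilinearMap R (fun _ : ι => V) W)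

def IsCentral (φ : Module.End R V) : Prop :=
  ∀ (v : ι → V) (i j : ι), Θ (update v i (φ (v i))) = Θ (update v j (φ (v j)))

variable {Θ}

theorem map_update_comp_perm (hsymm : ∀ (σ : Equiv.Perm ι) (v : ι → V), Θ (v ∘ σ) = Θ v)
    (σ : Equiv.Perm ι) (v : ι → V) (i : ι) (x : V) :
    Θ (update (v ∘ σ) i x) = Θ (update v (σ i) x) := by
  rw [← hsymm σ (update v (σ i) x), update_comp_equiv, Equiv.symm_apply_apply]

theorem isCentral_of_symmetric (hsymm : ∀ (σ : Equiv.Perm ι) (v : ι → V), Θ (v ∘ σ) = Θ v)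
    {φ : Module.End R V} {i j : ι} (hij : i ≠ j)
    (h : ∀ v : ι → V, Θ (update v i (φ (v i))) = Θ (update v j (φ (v j)))) :
    IsCentral Θ φ := by
  intro v k l
  rcases eq_or_ne k l with rfl | hkl
  · rfl
  have ht : Equiv.swap i k l ≠ i := by
    rw [Ne, Equiv.swap_apply_eq_iff, Equiv.swap_apply_left]
    exact hkl.symm
  let σ : Equiv.Perm ι := Equiv.swap i k * Equiv.swap j (Equiv.swap i k l)
  have hσi : σ i = k := by simp [σ, Equiv.swap_apply_of_ne_of_ne hij ht.symm]
  have hσj : σ j = l := by simp [σ]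
  have := h (v ∘ σ)
  rwa [map_update_comp_perm hsymm, map_update_comp_perm hsymm, comp_apply, comp_apply, hσi,
    hσj] at this

theorem isCentral_one : IsCentral Θ 1 := fun v i j => by
  simp only [Module.End.one_apply, update_eq_self]

theorem IsCentral.map_update_mul {φ : Module.End R V} (hφ : IsCentral Θ φ) (ψ : Module.End R V)
    (v : ι → V) {i k : ι} (hki : k ≠ i) :
    Θ (update v i ((φ * ψ) (v i))) = Θ (update (update v k (φ (v k))) i (ψ (v i))) := by
  have := hφ (update v i (ψ (v i))) i k
  rwa [update_self, update_idem, update_of_ne hki, update_comm hki.symm] at this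

theorem IsCentral.mul (h3 : ∀ i j : ι, ∃ k, k ≠ i ∧ k ≠ j) {φ ψ : Module.End R V}
    (hφ : IsCentral Θ φ) (hψ : IsCentral Θ ψ) : IsCentral Θ (φ * ψ) := by
  intro v i j
  obtain ⟨k, hki, hkj⟩ := h3 i j
  have := hψ (update v k (φ (v k))) i j
  rwa [update_of_ne hki.symm, update_of_ne hkj.symm, ← hφ.map_update_mul ψ v hki,
    ← hφ.map_update_mul ψ v hkj] at this

theorem IsCentral.map_update_mul_eq_update_update {φ ψ : Module.End R V} (hφ : IsCentral Θ φ)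
    (hψ : IsCentral Θ ψ) (v : ι → V) {i k l : ι} (hki : k ≠ i) (hkl : k ≠ l) :
    Θ (update v i ((φ * ψ) (v i))) = Θ (update (update v k (φ (v k))) l (ψ (v l))) := by
  have := hψ (update v k (φ (v k))) i l
  rwa [update_of_ne hki.symm, update_of_ne hkl.symm, ← hφ.map_update_mul ψ v hki] at this

theorem IsCentral.map_eq_zero {E : Module.End R V} (hE : IsCentral Θ E) {v : ι → V} {s s' : ι}
    (hs : E (v s) = v s) (hs' : E (v s') = 0) : Θ v = 0 := by
  have := hE v s s'
  rwa [hs, update_eq_self, hs', Θ.map_update_zero] at this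

end Semiring

section Ring

variable {R V W ι : Type*} [CommRing R] [AddCommGroup V] [Module R V] [AddCommGroup W]
  [Module R W] [DecidableEq ι] {Θ : MultilinearMap R (fun _ : ι => V) W}

theorem eq_zero_of_forall_map_update_eq_zero {l : ι}
    (hsmooth : ∀ u : V, (∀ w : V, Θ (update (fun _ => u) l w) = 0) → u = 0)
    {i : ι} (hil : i ≠ l) {u : V} (hu : ∀ v : ι → V, Θ (update v i u) = 0) : u = 0 :=
  hsmooth u fun w => by
    have := hu (update (fun _ => u) l w)
    rwa [update_eq_self_iff.mpr (update_of_ne hil _ _).symm] at this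

theorem IsCentral.eq_zero_of_mul_self {l : ι}
    (hsmooth : ∀ u : V, (∀ w : V, Θ (update (fun _ => u) l w) = 0) → u = 0)
    {i j : ι} (hij : i ≠ j) (hil : i ≠ l) (hjl : j ≠ l) {φ : Module.End R V}
    (hφ : IsCentral Θ φ) (h : φ * φ = 0) : φ = 0 := by
  ext x
  refine hsmooth (φ x) fun w => ?_
  set m := update (fun _ => φ x) l w
  have hmi : m i = φ x := update_of_ne hil _ _
  have hmj : m j = φ x := update_of_ne hjl _ _
  have := hφ (update m i x) i j
  rwa [update_self, update_idem, ← hmi, update_eq_self, update_of_ne hij.symm, hmj,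
    ← Module.End.mul_apply, h, LinearMap.zero_apply, map_update_zero] at this

theorem IsCentral.mul_comm (hsymm : ∀ (σ : Equiv.Perm ι) (v : ι → V), Θ (v ∘ σ) = Θ v)
    {l : ι} (hsmooth : ∀ u : V, (∀ w : V, Θ (update (fun _ => u) l w) = 0) → u = 0)
    {i k k' : ι} (hil : i ≠ l) (hki : k ≠ i) (hk'i : k' ≠ i) (hkk' : k ≠ k')
    {φ ψ : Module.End R V} (hφ : IsCentral Θ φ) (hψ : IsCentral Θ ψ) : φ * ψ = ψ * φ := by
  let σ := Equiv.swap k k'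
  have hσi : σ i = i := Equiv.swap_apply_of_ne_of_ne hki.symm hk'i.symm
  have hcomm (v : ι → V) :
      Θ (update v i ((φ * ψ) (v i))) = Θ (update v i ((ψ * φ) (v i))) :=
    calc Θ (update v i ((φ * ψ) (v i)))
        _ = Θ (update (update v k (φ (v k))) k' (ψ (v k'))) :=
          hφ.map_update_mul_eq_update_update hψ v hki hkk'
        _ = Θ (update (update v k' (ψ (v k'))) k (φ (v k)) ∘ σ) := by
          rw [hsymm, update_comm hkk']
        _ = Θ (update (update (v ∘ σ) k (ψ ((v ∘ σ) k))) k' (φ ((v ∘ σ) k'))) := by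
          simp [σ, update_comp_equiv]
        _ = Θ (update (v ∘ σ) i ((ψ * φ) ((v ∘ σ) i))) :=
          (hψ.map_update_mul_eq_update_update hφ (v ∘ σ) hki hkk').symm
        _ = Θ (update v i ((ψ * φ) (v i))) := by
          rw [map_update_comp_perm hsymm, comp_apply, hσi]
  ext x
  rw [← sub_eq_zero]
  refine eq_zero_of_forall_map_update_eq_zero hsmooth hil fun v => ?_
  have := hcomm (update v i x)
  rw [update_self, update_idem, update_idem] at this
  rw [map_update_sub, this, sub_self]

end Ring

section Diagonal

variable {R V W ι κ : Type*} [CommSemiring R] [AddCommMonoid V] [Module R V] [AddCommMonoid W]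
  [Module R W] [DecidableEq ι] {Θ : MultilinearMap R (fun _ : ι => V) W}

def IsDiagonal (Θ : MultilinearMap R (fun _ : ι => V) W) (β : Basis κ R V) : Prop :=
  ∀ j : ι → κ, (¬ ∀ s s', j s = j s') → Θ (fun s => β (j s)) = 0

theorem IsDiagonal.isCentral_end [Finite ι] [Fintype κ] [DecidableEq κ] {β : Basis κ R V}
    (hβ : IsDiagonal Θ β) (q : κ) : IsCentral Θ (β.end (q, q)) := by
  have key (r : ι) (p : ι → κ) : Θ (update (β ∘ p) r (β.end (q, q) (β (p r)))) =
      if q = p r then Θ (β ∘ p) else 0 := by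
    rw [Basis.end_apply_apply]
    dsimp only
    split_ifs with h
    · rw [h]
      exact congrArg Θ (update_eq_self r (β ∘ p))
    · exact Θ.map_update_zero _ r
  intro v r r'
  let slot (r : ι) := Θ.compLinearMap (update (fun _ => LinearMap.id) r (β.end (q, q)))
  have hslot (r : ι) (v : ι → V) : slot r v = Θ (update v r (β.end (q, q) (v r))) := by
    refine congrArg Θ (funext fun i => ?_)
    rcases eq_or_ne i r with rfl | h
    · simp
    · simp [h]
  suffices slot r = slot r' by rw [← hslot, ← hslot, this]
  refine Basis.ext_multilinear (fun _ => β) fun p => ?_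
  rw [hslot, hslot]
  refine (key r p).trans (Eq.trans ?_ (key r' p).symm)
  by_cases hc : p r = p r'
  · rw [hc]
  · rw [show Θ (β ∘ p) = 0 from hβ p fun h => hc (h r r'), ite_self, ite_self]

end Diagonal

section Field

variable {K V W ι κ : Type*} [Field K] [AddCommGroup V] [Module K V] [FiniteDimensional K V]
  [AddCommGroup W] [Module K W] [DecidableEq ι] {Θ : MultilinearMap K (fun _ : ι => V) W}

theorem IsDiagonal.card_le_finrank [Finite ι] [Fintype κ] {β : Basis κ K V}
    (hβ : IsDiagonal Θ β) {Z : Submodule K (Module.End K V)}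
    (hZ : ∀ φ, IsCentral Θ φ → φ ∈ Z) : Fintype.card κ ≤ finrank K Z := by
  classical
  let π (q : κ) : Z := ⟨β.end (q, q), hZ _ (hβ.isCentral_end q)⟩
  have hind : LinearIndependent K (Z.subtype ∘ π) :=
    β.end.linearIndependent.comp (fun q => (q, q)) fun q q' h => congrArg Prod.fst h
  exact hind.of_comp.fintype_card_le_finrank

theorem exists_isDiagonal_of_orthogonalIdempotents [Fintype κ] {E : κ → Module.End K V}
    (hE : OrthogonalIdempotents E) (hEΘ : ∀ i, IsCentral Θ (E i)) {x : κ → V}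
    (hx : ∀ i, E i (x i) ≠ 0) (hcard : Fintype.card κ = finrank K V) :
    ∃ β : Basis κ K V, IsDiagonal Θ β := by
  let β := basisOfLinearIndependentOfCardEqFinrank' _ (hE.linearIndependent_apply hx) hcard
  have hβ (i : κ) : β i = E i (x i) := by simp [β]
  refine ⟨β, fun j hj => ?_⟩
  push Not at hj
  obtain ⟨s, s', hss'⟩ := hj
  refine (hEΘ (j s)).map_eq_zero (s := s) (s' := s') ?_ ?_
  · rw [hβ, ← Module.End.mul_apply, (hE.idem _).eq]
  · rw [hβ, ← Module.End.mul_apply, hE.ortho hss', LinearMap.zero_apply]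

end Field

end MultilinearMap

open MultilinearMap in
/-- Let `Θ` be a smooth symmetric `d`-multilinear form on an `n`-dimensional
`ℂ`-vector space `V`. Then the center `Z(V,Θ)` is isomorphic as a `ℂ`-algebra to
`ℂ × ⋯ × ℂ` (`dim Z(V,Θ)` copies), `dim Z(V,Θ) ≤ n`, and `(V,Θ)` is diagonalizable iff
`dim Z(V,Θ) = n`. -/
theorem stmt_14 {V : Type*} [AddCommGroup V] [Module ℂ V] [FiniteDimensional ℂ V]
    {d n : ℕ} (hd : 3 ≤ d) (hn : Module.finrank ℂ V = n)
    (Θ : MultilinearMap ℂ (fun _ : Fin d => V) ℂ)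
    (hsymm : ∀ (σ : Equiv.Perm (Fin d)) (v : Fin d → V), Θ (v ∘ σ) = Θ v)
    (hsmooth : ∀ u : V,
      (∀ w : V, Θ (Function.update (fun _ => u) ⟨d - 1, by omega⟩ w) = 0) → u = 0)
    (ZS : Submodule ℂ (Module.End ℂ V))
    (hZS : ∀ φ : Module.End ℂ V, φ ∈ ZS ↔ ∀ v : Fin d → V,
      Θ (Function.update v ⟨0, by omega⟩ (φ (v ⟨0, by omega⟩)))
        = Θ (Function.update v ⟨1, by omega⟩ (φ (v ⟨1, by omega⟩)))) :
    (∃ F : Module.End ℂ V → (Fin (Module.finrank ℂ ↥ZS) → ℂ),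
        Set.BijOn F (ZS : Set (Module.End ℂ V)) Set.univ ∧
        (∀ φ ∈ ZS, ∀ ψ ∈ ZS, F (φ + ψ) = F φ + F ψ) ∧
        (∀ c : ℂ, ∀ φ ∈ ZS, F (c • φ) = c • F φ) ∧
        (∀ φ ∈ ZS, ∀ ψ ∈ ZS, F (φ * ψ) = F φ * F ψ) ∧
        F 1 = 1) ∧
    Module.finrank ℂ ↥ZS ≤ n ∧
    ((∃ β : Module.Basis (Fin n) ℂ V, ∀ j : Fin d → Fin n,
        (¬ ∀ s s' : Fin d, j s = j s') → Θ (fun s => β (j s)) = 0)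
      ↔ Module.finrank ℂ ↥ZS = n) := by
  set i₀ : Fin d := ⟨0, by omega⟩
  set i₁ : Fin d := ⟨1, by omega⟩
  set i₂ : Fin d := ⟨2, by omega⟩
  set l : Fin d := ⟨d - 1, by omega⟩
  have h01 : i₀ ≠ i₁ := by simp [i₀, i₁]
  have h12 : i₁ ≠ i₂ := by simp [i₁, i₂]
  have h20 : i₂ ≠ i₀ := by simp [i₀, i₂]
  have h0l : i₀ ≠ l := by simp [i₀, l, Fin.ext_iff]; omega
  have h1l : i₁ ≠ l := by simp [i₁, l, Fin.ext_iff]; omega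
  have hZ (φ : Module.End ℂ V) : φ ∈ ZS ↔ IsCentral Θ φ :=
    (hZS φ).trans ⟨isCentral_of_symmetric hsymm h01, fun h v => h v _ _⟩
  let Z : Subalgebra ℂ (Module.End ℂ V) := ZS.toSubalgebra ((hZ 1).2 isCentral_one)
    fun φ ψ hφ hψ => (hZ _).2 (((hZ φ).1 hφ).mul
      (fun i j => Fin.exists_ne_and_ne_of_two_lt i j hd) ((hZ ψ).1 hψ))
  let : CommRing Z :=
    { mul_comm a b := Subtype.ext (((hZ _).1 a.2).mul_comm hsymm hsmooth h0l h01.symm h20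
        h12 ((hZ _).1 b.2)) }
  have : IsReduced Z := (isReduced_iff_pow_one_lt 2 one_lt_two).2 fun φ hφ =>
    Subtype.ext (((hZ _).1 φ.2).eq_zero_of_mul_self hsmooth h01 h0l h1l
      (by simpa [sq] using congrArg Subtype.val hφ))
  obtain ⟨e⟩ : Nonempty (Z ≃ₐ[ℂ] (Fin (finrank ℂ ZS) → ℂ)) :=
    IsReduced.nonempty_algEquiv_fin_pi ℂ Z
  obtain ⟨hE, hE0⟩ := e.orthogonalIdempotents_symm_single
  choose x hx using fun i => DFunLike.ne_iff.mp (hE0 i)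
  have hle : finrank ℂ ZS ≤ n := by
    simpa [hn] using (hE.linearIndependent_apply hx).fintype_card_le_finrank
  refine ⟨Z.exists_bijOn_of_algEquiv e, hle, fun ⟨β, hβ⟩ => hle.antisymm ?_, fun h => ?_⟩
  · simpa using IsDiagonal.card_le_finrank hβ fun φ => (hZ φ).2
  · rw [← h]
    exact exists_isDiagonal_of_orthogonalIdempotents hE (fun i => (hZ _).1 (e.symm _).2) hx
      (by simp [hn, h])
end

section
/- A complex symmetric d-tensor A = (a_{i₁⋯i_d}) of dimension n is symmetrically odeco over ℂ — i.e. there exists a complex orthogonal matrix O (OᵀO = Iₙ, O ∈ ℂ^{n×n}) such that the d-congruence AO^d is a diagonal tensor — if and only if the slice matrices A^{(i₃⋯i_d)} pairwise commute and each slice A^{(i₃⋯i_d)} is a diagonalizable matrix. -/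
/-!
If `O` is complex orthogonal and `AO^d` is diagonal with diagonal entries `λ_j`, inverting the
congruence gives `A = ∑_j λ_j o_j^{⊗d}` for the columns `o_j` of `O`, so every slice equals
`O · diag(λ_j ∏_t O_{c_t j}) · Oᵀ`: the slices commute and `O` diagonalizes all of them.

Conversely, the slices of a symmetric tensor are complex symmetric matrices. If they commute and
are diagonalizable, their joint eigenspaces decompose `ℂⁿ` and are pairwise orthogonal for the
bilinear form `x ⬝ᵥ y`, which is therefore nondegenerate on each of them. Since square roots exist
in `ℂ`, each joint eigenspace has a basis that is orthonormal for `x ⬝ᵥ y`; together these bases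
form a complex orthogonal `O` with every `Oᵀ A^{(c)} O` diagonal. Expanding the congruence along the
first two indices, `(AO^d)_j = ∑_c (Oᵀ A^{(c)} O)_{j₁ j₂} ∏_t O_{c_t j_{t+2}}`, which vanishes when
`j₁ ≠ j₂`; by symmetry of `A`, any non-constant index tuple can be permuted into that shape.
-/

open Matrix

namespace Matrix
open Module.End

variable {K ι : Type*} [Field K] [Fintype ι] [DecidableEq ι]

theorem maxGenEigenspace_toLin'_eq_eigenspace {M Q : Matrix ι ι K} (hQ : IsUnit Q)
    (hMQ : (Q⁻¹ * M * Q).IsDiag) (μ : K) :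
    maxGenEigenspace (toLin' M) μ = eigenspace (toLin' M) μ := by
  obtain ⟨U, rfl⟩ := hQ
  rw [← coe_units_inv] at hMQ
  set d := ((↑U⁻¹ : Matrix ι ι K) * M * U).diag
  have hM (k : ℕ) : (M - μ • 1) ^ k
      = U * diagonal (fun i => (d i - μ) ^ k) * (↑U⁻¹ : Matrix ι ι K) := by
    rw [← Pi.pow_def, ← diagonal_pow, ← Units.conj_pow, ← diagonal_sub,
      ← smul_one_eq_diagonal, hMQ.diagonal_diag, mul_sub, sub_mul]
    simp [mul_assoc]
  have hlin (k : ℕ) : (toLin' M - μ • 1) ^ k = toLin' ((M - μ • 1) ^ k) := by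
    change _ = toLinAlgEquiv' _
    rw [map_pow, map_sub, map_smul, map_one]
    rfl
  have hU (v : ι → K) : (↑U⁻¹ : Matrix ι ι K) *ᵥ ((U : Matrix ι ι K) *ᵥ v) = v := by
    rw [mulVec_mulVec, Units.inv_mul, one_mulVec]
  refine le_antisymm (fun x hx => ?_) eigenspace_le_maxGenEigenspace
  obtain ⟨k, hk⟩ := (mem_maxGenEigenspace _ _ _).mp hx
  rw [hlin, toLin'_apply, hM, ← mulVec_mulVec, ← mulVec_mulVec] at hk
  have hy : diagonal (fun i => d i - μ) *ᵥ ((↑U⁻¹ : Matrix ι ι K) *ᵥ x) = 0 := by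
    replace hk := congrArg ((↑U⁻¹ : Matrix ι ι K) *ᵥ ·) hk
    simp only [hU, mulVec_zero] at hk
    ext i
    have := congrFun hk i
    rw [mulVec_diagonal] at this ⊢
    rcases mul_eq_zero.mp this with h | h
    · rw [eq_zero_of_pow_eq_zero h, zero_mul, Pi.zero_apply]
    · rw [h, mul_zero, Pi.zero_apply]
  have h1 : (M - μ • 1) *ᵥ x = 0 := by
    rw [← pow_one (M - μ • 1), hM, ← mulVec_mulVec, ← mulVec_mulVec]
    simp only [pow_one, hy, mulVec_zero]
  rw [mem_eigenspace_iff, toLin'_apply, ← sub_eq_zero]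
  simpa [sub_mulVec, smul_mulVec] using h1

theorem isInternal_iInf_eigenspace_toLin' [IsAlgClosed K] {κ : Type*} [DecidableEq (κ → K)]
    (M : κ → Matrix ι ι K) (hcomm : ∀ c c', Commute (M c) (M c'))
    (hdiag : ∀ c, ∃ Q, IsUnit Q ∧ (Q⁻¹ * M c * Q).IsDiag) :
    DirectSum.IsInternal fun χ : κ → K => ⨅ c, eigenspace (toLin' (M c)) (χ c) := by
  have hcomm' (c c') : Commute (toLin' (M c)) (toLin' (M c')) :=
    (hcomm c c').map toLinAlgEquiv'
  have hmax (c) (μ : K) : maxGenEigenspace (toLin' (M c)) μ = eigenspace (toLin' (M c)) μ :=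
    let ⟨_, hQ, hMQ⟩ := hdiag c
    maxGenEigenspace_toLin'_eq_eigenspace hQ hMQ μ
  refine DirectSum.isInternal_submodule_of_iSupIndep_of_iSup_eq_top ?_ ?_
  · simpa only [hmax] using independent_iInf_maxGenEigenspace_of_forall_mapsTo _
      fun c c' μ => mapsTo_maxGenEigenspace_of_comm (hcomm' c' c) μ
  · simpa only [hmax] using
      iSup_iInf_maxGenEigenspace_eq_top_of_iSup_maxGenEigenspace_eq_top_of_commute _
        (fun c c' _ => hcomm' c c') fun c => iSup_maxGenEigenspace_eq_top _

theorem dotProduct_eq_zero_of_mem_eigenspace {M : Matrix ι ι K} (hM : Mᵀ = M) {a b : K}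
    (hab : a ≠ b) {x y : ι → K} (hx : x ∈ eigenspace (toLin' M) a)
    (hy : y ∈ eigenspace (toLin' M) b) : x ⬝ᵥ y = 0 := by
  rw [mem_eigenspace_iff, toLin'_apply] at hx hy
  have : a * (x ⬝ᵥ y) = b * (x ⬝ᵥ y) :=
    calc a * (x ⬝ᵥ y) = (M *ᵥ x) ⬝ᵥ y := by rw [hx, smul_dotProduct, smul_eq_mul]
      _ = x ⬝ᵥ (M *ᵥ y) := by rw [← vecMul_transpose, hM, ← dotProduct_mulVec]
      _ = b * (x ⬝ᵥ y) := by rw [hy, dotProduct_smul, smul_eq_mul]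
  by_contra h
  exact hab (mul_right_cancel₀ h this)

end Matrix

theorem isSymm_dotProductBilin {K ι : Type*} [Field K] [Fintype ι] :
    LinearMap.BilinForm.IsSymm (dotProductBilin K K : LinearMap.BilinForm K (ι → K)) :=
  ⟨fun x y => dotProduct_comm x y⟩

theorem nondegenerate_dotProductBilin {K ι : Type*} [Field K] [Fintype ι] [DecidableEq ι] :
    (dotProductBilin K K : LinearMap.BilinForm K (ι → K)).Nondegenerate := by
  refine ⟨fun x hx => funext fun i => ?_, fun y hy => funext fun i => ?_⟩
  · simpa using hx (Pi.single i 1)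
  · simpa using hy (Pi.single i 1)

namespace LinearMap.BilinForm
variable {K V : Type*} [Field K] [AddCommGroup V] [Module K V]

theorem exists_orthonormal_basis [FiniteDimensional K V] [IsAlgClosed K] [Invertible (2 : K)]
    {B : LinearMap.BilinForm K V} (hB : B.IsSymm) (hnd : B.Nondegenerate) :
    ∃ v : Module.Basis (Fin (Module.finrank K V)) K V,
      ∀ i j, B (v i) (v j) = if i = j then 1 else 0 := by
  obtain ⟨v, hv⟩ := exists_orthogonal_basis (isSymm_iff.mp hB)
  have hvv (i) : B (v i) (v i) ≠ 0 :=
    iIsOrtho.not_isOrtho_basis_self_of_nondegenerate hv hnd i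
  choose s hs using fun i => IsAlgClosed.exists_pow_nat_eq (B (v i) (v i)) two_pos
  have hs0 (i) : s i ≠ 0 := fun h => hvv i (by rw [← hs i, h, zero_pow two_ne_zero])
  refine ⟨v.unitsSMul fun i => Units.mk0 (s i)⁻¹ (inv_ne_zero (hs0 i)), fun i j => ?_⟩
  simp only [Module.Basis.unitsSMul_apply, Units.smul_def, Units.val_mk0, map_smul,
    LinearMap.smul_apply, smul_eq_mul]
  split_ifs with hij
  · subst hij
    rw [← hs i]
    field_simp [hs0 i]
  · rw [hv hij, mul_zero, mul_zero]

theorem nondegenerate_restrict_of_iSup_eq_top {χ : Type*} {W : χ → Submodule K V}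
    (hW : ⨆ c, W c = ⊤) {B : LinearMap.BilinForm K V} (hB : B.IsRefl) (hnd : B.Nondegenerate)
    (horth : ∀ c₁ c₂, c₁ ≠ c₂ → ∀ x ∈ W c₁, ∀ y ∈ W c₂, B x y = 0) (c : χ) :
    (B.restrict (W c)).Nondegenerate := by
  refine B.nondegenerate_restrict_of_disjoint_orthogonal hB (Submodule.disjoint_def.mpr ?_)
  intro x hx hxo
  refine hnd.2 x fun z => ?_
  have hz : z ∈ ⨆ c, W c := hW ▸ Submodule.mem_top
  induction hz using Submodule.iSup_induction' with
  | mem c' z hz =>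
    obtain rfl | h := eq_or_ne c' c
    · exact (mem_orthogonal_iff.mp hxo) z hz
    · exact horth c' c h z hz x hx
  | zero => rw [map_zero, LinearMap.zero_apply]
  | add z₁ z₂ _ _ h₁ h₂ => rw [map_add, LinearMap.add_apply, h₁, h₂, add_zero]

theorem exists_orthonormal_basis_of_isInternal [FiniteDimensional K V] [IsAlgClosed K]
    [Invertible (2 : K)] {χ : Type*} [DecidableEq χ] {W : χ → Submodule K V}
    (hW : DirectSum.IsInternal W) {B : LinearMap.BilinForm K V} (hB : B.IsSymm)
    (hnd : B.Nondegenerate) (horth : ∀ c₁ c₂, c₁ ≠ c₂ → ∀ x ∈ W c₁, ∀ y ∈ W c₂, B x y = 0) :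
    ∃ b : Module.Basis (Σ c, Fin (Module.finrank K (W c))) K V,
      (∀ a, b a ∈ W a.1) ∧ ∀ a a', B (b a) (b a') = if a = a' then 1 else 0 := by
  have hndW :=
    nondegenerate_restrict_of_iSup_eq_top hW.submodule_iSup_eq_top hB.isRefl hnd horth
  choose v hv using fun c => exists_orthonormal_basis (hB.restrict (W c)) (hndW c)
  refine ⟨hW.collectedBasis v, hW.collectedBasis_mem v, ?_⟩
  rintro ⟨c, i⟩ ⟨c', j⟩
  simp only [hW.collectedBasis_coe]
  obtain rfl | h := eq_or_ne c c'
  · simpa using hv c i j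
  · rw [horth c c' h _ (v c i).2 _ (v c' j).2, if_neg (by simp [h])]

end LinearMap.BilinForm

namespace Matrix
open Module.End

theorem of_mul_mul_transpose_apply {R m n : Type*} [CommSemiring R] [Fintype n]
    (v : m → n → R) (M : Matrix n n R) (k l : m) :
    (of v * M * (of v)ᵀ : Matrix m m R) k l = v k ⬝ᵥ (M *ᵥ v l) := by
  rw [Matrix.mul_assoc]
  rfl

variable {K ι : Type*} [Field K] [Fintype ι] [DecidableEq ι]

theorem exists_orthogonal_conj_isDiag [IsAlgClosed K] [Invertible (2 : K)] {κ : Type*}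
    (M : κ → Matrix ι ι K) (hsymm : ∀ c, (M c)ᵀ = M c) (hcomm : ∀ c c', Commute (M c) (M c'))
    (hdiag : ∀ c, ∃ Q, IsUnit Q ∧ (Q⁻¹ * M c * Q).IsDiag) :
    ∃ O : Matrix ι ι K, Oᵀ * O = 1 ∧ ∀ c, (Oᵀ * M c * O).IsDiag := by
  classical
  have horth (χ₁ χ₂ : κ → K) (h : χ₁ ≠ χ₂) (x) (hx : x ∈ ⨅ c, eigenspace (toLin' (M c)) (χ₁ c))
      (y) (hy : y ∈ ⨅ c, eigenspace (toLin' (M c)) (χ₂ c)) :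
      dotProductBilin K K x y = 0 :=
    let ⟨c, hc⟩ := Function.ne_iff.mp h
    dotProduct_eq_zero_of_mem_eigenspace (hsymm c) hc ((Submodule.mem_iInf _).mp hx c)
      ((Submodule.mem_iInf _).mp hy c)
  obtain ⟨b, hbW, hb⟩ := LinearMap.BilinForm.exists_orthonormal_basis_of_isInternal
    (isInternal_iInf_eigenspace_toLin' M hcomm hdiag) isSymm_dotProductBilin
    nondegenerate_dotProductBilin horth
  let e := b.indexEquiv (Pi.basisFun K ι)
  have hv (k l : ι) : b (e.symm k) ⬝ᵥ b (e.symm l) = if k = l then 1 else 0 := by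
    simpa [e.symm.injective.eq_iff] using hb (e.symm k) (e.symm l)
  refine ⟨(of fun k => b (e.symm k))ᵀ, ?_, fun c k l hkl => ?_⟩
  · ext k l
    rw [transpose_transpose, mul_apply', one_apply]
    exact hv k l
  · beta_reduce
    have hl := (Submodule.mem_iInf _).mp (hbW (e.symm l)) c
    rw [mem_eigenspace_iff, toLin'_apply] at hl
    rw [transpose_transpose, of_mul_mul_transpose_apply, hl, dotProduct_smul, hv, if_neg hkl,
      smul_zero]

end Matrix

theorem Fin.sum_pi_cons {R ι : Type*} [AddCommMonoid R] [Fintype ι] {d : ℕ}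
    (f : (Fin (d + 1) → ι) → R) : ∑ x, f x = ∑ i, ∑ x : Fin d → ι, f (Fin.cons i x) := by
  rw [← (Fin.consEquiv fun _ => ι).sum_comp, Fintype.sum_prod_type]
  rfl

theorem exists_perm_apply_zero_ne_apply_one {α : Type*} {d : ℕ} {f : Fin (d + 2) → α}
    (hf : ¬ ∀ s s', f s = f s') : ∃ σ : Equiv.Perm (Fin (d + 2)), (f ∘ σ) 0 ≠ (f ∘ σ) 1 := by
  obtain ⟨s, hs⟩ : ∃ s, f s ≠ f 0 := by
    by_contra! h
    exact hf fun s s' => (h s).trans (h s').symm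
  have hs0 : (0 : Fin (d + 2)) ≠ s := fun h => hs (h ▸ rfl)
  refine ⟨Equiv.swap 1 s, ?_⟩
  simpa [Equiv.swap_apply_of_ne_of_ne zero_ne_one hs0] using hs.symm

section SymmetricTensor

variable {R ι : Type*} {d e : ℕ}

def IsSymmTensor (A : (Fin d → ι) → R) : Prop :=
  ∀ (σ : Equiv.Perm (Fin d)) (idx : Fin d → ι), A (idx ∘ σ) = A idx

def IsDiagTensor [Zero R] (T : (Fin d → ι) → R) : Prop :=
  ∀ jdx : Fin d → ι, (¬ ∀ s s', jdx s = jdx s') → T jdx = 0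

def tensorSlice (A : (Fin (e + 2) → ι) → R) (c : Fin e → ι) : Matrix ι ι R :=
  of fun i j => A (Fin.cons i (Fin.cons j c))

theorem tensorSlice_transpose {A : (Fin (e + 2) → ι) → R} (hA : IsSymmTensor A)
    (c : Fin e → ι) : (tensorSlice A c)ᵀ = tensorSlice A c := by
  ext i j
  rw [transpose_apply, tensorSlice, of_apply, of_apply, ← hA (Equiv.swap 0 1)]
  congr 1
  funext t
  refine Fin.cases ?_ (Fin.cases ?_ fun t => ?_) t
  · simp
  · simp
  · simp [Equiv.swap_apply_of_ne_of_ne, Fin.succ_ne_zero, Fin.succ_succ_ne_one]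

variable [CommSemiring R] [Fintype ι]

-- The `d`-congruence `AP^d` of the paper.
def tensorCongr (A : (Fin d → ι) → R) (P : Matrix ι ι R) (jdx : Fin d → ι) : R :=
  ∑ idx : Fin d → ι, A idx * ∏ t, P (idx t) (jdx t)

theorem tensorCongr_tensorCongr (A : (Fin d → ι) → R) (P Q : Matrix ι ι R) :
    tensorCongr (tensorCongr A P) Q = tensorCongr A (P * Q) := by
  ext jdx
  simp only [tensorCongr, Finset.sum_mul, mul_assoc, ← Finset.prod_mul_distrib]
  rw [Finset.sum_comm]
  simp only [← Finset.mul_sum, mul_apply, Fintype.prod_sum]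

theorem tensorCongr_one [DecidableEq ι] (A : (Fin d → ι) → R) : tensorCongr A 1 = A := by
  ext jdx
  simp only [tensorCongr, one_apply, Finset.prod_ite_zero, Finset.prod_const_one]
  simp [← funext_iff]

theorem tensorCongr_eq_sum_of_isDiagTensor [NeZero d] {D : (Fin d → ι) → R}
    (hD : IsDiagTensor D) (P : Matrix ι ι R) (jdx : Fin d → ι) :
    tensorCongr D P jdx = ∑ i, D (fun _ => i) * ∏ t, P i (jdx t) := by
  classical
  have hconst : Set.InjOn (fun i : ι => fun _ : Fin d => i) (Finset.univ : Finset ι) :=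
    fun i _ j _ h => congrFun h 0
  rw [tensorCongr, ← Finset.sum_image (f := fun idx => D idx * ∏ t, P (idx t) (jdx t)) hconst]
  refine (Finset.sum_subset (Finset.subset_univ _) fun idx _ hidx => ?_).symm
  have hidx' : ¬ ∀ s s', idx s = idx s' := fun h =>
    hidx (Finset.mem_image.mpr ⟨idx 0, Finset.mem_univ _, funext fun t => h 0 t⟩)
  rw [hD idx hidx', zero_mul]

theorem tensorSlice_eq_of_isDiagTensor [DecidableEq ι] {A : (Fin (e + 2) → ι) → R}
    {O : Matrix ι ι R} (hO : O * Oᵀ = 1) (hA : IsDiagTensor (tensorCongr A O))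
    (c : Fin e → ι) :
    tensorSlice A c
      = O * diagonal (fun i => tensorCongr A O (fun _ => i) * ∏ t, O (c t) i) * Oᵀ := by
  have hrep := tensorCongr_eq_sum_of_isDiagTensor hA Oᵀ
  rw [tensorCongr_tensorCongr, hO, tensorCongr_one] at hrep
  ext i j
  rw [tensorSlice, of_apply, hrep, mul_apply]
  simp only [Fin.prod_univ_succ, Fin.cons_zero, Fin.cons_succ, transpose_apply, mul_diagonal]
  exact Finset.sum_congr rfl fun _ _ => by ring

theorem commute_tensorSlice_of_isDiagTensor [DecidableEq ι] {A : (Fin (e + 2) → ι) → R}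
    {O : Matrix ι ι R} (hO : Oᵀ * O = 1) (hA : IsDiagTensor (tensorCongr A O))
    (c c' : Fin e → ι) : Commute (tensorSlice A c) (tensorSlice A c') := by
  have hcancel (X : Matrix ι ι R) : Oᵀ * (O * X) = X := by
    rw [← Matrix.mul_assoc, hO, Matrix.one_mul]
  rw [tensorSlice_eq_of_isDiagTensor (mul_eq_one_comm.mp hO) hA c,
    tensorSlice_eq_of_isDiagTensor (mul_eq_one_comm.mp hO) hA c']
  simp only [Commute, SemiconjBy, Matrix.mul_assoc, hcancel]
  rw [← Matrix.mul_assoc (diagonal _), (commute_diagonal _ _).eq, Matrix.mul_assoc]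

theorem isDiag_transpose_mul_tensorSlice_mul_of_isDiagTensor [DecidableEq ι]
    {A : (Fin (e + 2) → ι) → R} {O : Matrix ι ι R} (hO : Oᵀ * O = 1)
    (hA : IsDiagTensor (tensorCongr A O)) (c : Fin e → ι) :
    (Oᵀ * tensorSlice A c * O).IsDiag := by
  have hcancel (X : Matrix ι ι R) : Oᵀ * (O * X) = X := by
    rw [← Matrix.mul_assoc, hO, Matrix.one_mul]
  rw [tensorSlice_eq_of_isDiagTensor (mul_eq_one_comm.mp hO) hA c]
  simp only [Matrix.mul_assoc, hO, Matrix.mul_one, hcancel]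
  exact isDiag_diagonal _

theorem tensorCongr_comp_perm {A : (Fin d → ι) → R} (hA : IsSymmTensor A) (P : Matrix ι ι R)
    (σ : Equiv.Perm (Fin d)) (jdx : Fin d → ι) :
    tensorCongr A P (jdx ∘ σ) = tensorCongr A P jdx := by
  refine Fintype.sum_equiv (σ.arrowCongr (Equiv.refl ι)) _ _ fun idx => ?_
  change A idx * _ = A (idx ∘ σ.symm) * ∏ t, P (idx (σ.symm t)) (jdx t)
  rw [hA σ.symm, ← Equiv.prod_comp σ fun t => P (idx (σ.symm t)) (jdx t)]
  simp

theorem tensorCongr_eq_sum_tensorSlice (A : (Fin (e + 2) → ι) → R) (P : Matrix ι ι R)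
    (jdx : Fin (e + 2) → ι) :
    tensorCongr A P jdx = ∑ c : Fin e → ι,
      (Pᵀ * tensorSlice A c * P) (jdx 0) (jdx 1) * ∏ t : Fin e, P (c t) (jdx t.succ.succ) := by
  simp only [tensorCongr, Fin.sum_pi_cons, Fin.prod_univ_succ, Fin.cons_zero, Fin.cons_succ,
    mul_apply, transpose_apply, tensorSlice, of_apply, Finset.sum_mul]
  rw [Finset.sum_comm]
  refine (Finset.sum_congr rfl fun _ _ => Finset.sum_comm).trans ?_
  rw [Finset.sum_comm]
  refine Finset.sum_congr rfl fun c _ => Finset.sum_congr rfl fun k _ =>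
    Finset.sum_congr rfl fun i _ => ?_
  rw [Fin.succ_zero_eq_one]
  ring

theorem isDiagTensor_tensorCongr_of_isDiag {A : (Fin (e + 2) → ι) → R} (hA : IsSymmTensor A)
    {P : Matrix ι ι R} (hP : ∀ c, (Pᵀ * tensorSlice A c * P).IsDiag) :
    IsDiagTensor (tensorCongr A P) := by
  intro jdx hjdx
  obtain ⟨σ, hσ⟩ := exists_perm_apply_zero_ne_apply_one hjdx
  rw [← tensorCongr_comp_perm hA P σ, tensorCongr_eq_sum_tensorSlice]
  exact Finset.sum_eq_zero fun c _ => by rw [hP c hσ, zero_mul]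

end SymmetricTensor

theorem stmt_19_general {n e : ℕ} (A : (Fin (e + 2) → Fin n) → ℂ)
    (hA : ∀ (σ : Equiv.Perm (Fin (e + 2))) (idx : Fin (e + 2) → Fin n), A (idx ∘ σ) = A idx) :
    (∃ O : Matrix (Fin n) (Fin n) ℂ, Oᵀ * O = 1 ∧
        ∀ jdx : Fin (e + 2) → Fin n, (¬ ∀ s s' : Fin (e + 2), jdx s = jdx s') →
          (∑ idx : Fin (e + 2) → Fin n, A idx * ∏ t, O (idx t) (jdx t)) = 0)
      ↔ ((∀ c c' : Fin e → Fin n,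
            Matrix.of (fun i j => A (Fin.cons i (Fin.cons j c)))
                * Matrix.of (fun i j => A (Fin.cons i (Fin.cons j c')))
              = Matrix.of (fun i j => A (Fin.cons i (Fin.cons j c')))
                * Matrix.of (fun i j => A (Fin.cons i (Fin.cons j c)))) ∧
          (∀ c : Fin e → Fin n, ∃ Q : Matrix (Fin n) (Fin n) ℂ, IsUnit Q ∧
            (Q⁻¹ * Matrix.of (fun i j => A (Fin.cons i (Fin.cons j c))) * Q).IsDiag)) := by
  constructor
  · rintro ⟨O, hO, hA⟩
    refine ⟨commute_tensorSlice_of_isDiagTensor hO hA, fun c => ⟨O, ?_, ?_⟩⟩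
    · exact ⟨⟨O, Oᵀ, mul_eq_one_comm.mp hO, hO⟩, rfl⟩
    · rw [inv_eq_left_inv hO]
      exact isDiag_transpose_mul_tensorSlice_mul_of_isDiagTensor hO hA c
  · rintro ⟨hcomm, hdiag⟩
    obtain ⟨O, hO, hOdiag⟩ :=
      exists_orthogonal_conj_isDiag (tensorSlice A) (tensorSlice_transpose hA) hcomm hdiag
    exact ⟨O, hO, isDiagTensor_tensorCongr_of_isDiag hA hOdiag⟩

/-- A complex symmetric `d`-tensor `A` (here `d = e + 2 ≥ 3`) of dimension
`n` is symmetrically odeco over `ℂ` — there is a complex orthogonal matrix `O` (`OᵀO = Iₙ`)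
such that the `d`-congruence `AO^d` is a diagonal tensor — iff the slice matrices
`A^{(i₃⋯i_d)}` pairwise commute and each slice is a diagonalizable matrix. -/
theorem stmt_19 {n e : ℕ} (he : 1 ≤ e)
    (A : (Fin (e + 2) → Fin n) → ℂ)
    (hA : ∀ (σ : Equiv.Perm (Fin (e + 2))) (idx : Fin (e + 2) → Fin n), A (idx ∘ σ) = A idx) :
    (∃ O : Matrix (Fin n) (Fin n) ℂ, Oᵀ * O = 1 ∧
        ∀ jdx : Fin (e + 2) → Fin n, (¬ ∀ s s' : Fin (e + 2), jdx s = jdx s') →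
          (∑ idx : Fin (e + 2) → Fin n, A idx * ∏ t, O (idx t) (jdx t)) = 0)
      ↔ ((∀ c c' : Fin e → Fin n,
            Matrix.of (fun i j => A (Fin.cons i (Fin.cons j c)))
                * Matrix.of (fun i j => A (Fin.cons i (Fin.cons j c')))
              = Matrix.of (fun i j => A (Fin.cons i (Fin.cons j c')))
                * Matrix.of (fun i j => A (Fin.cons i (Fin.cons j c)))) ∧
          (∀ c : Fin e → Fin n, ∃ Q : Matrix (Fin n) (Fin n) ℂ, IsUnit Q ∧
            (Q⁻¹ * Matrix.of (fun i j => A (Fin.cons i (Fin.cons j c))) * Q).IsDiag)) :=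
  stmt_19_general A hA
end
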